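/- Let X : Fin N → ℝ³ be a point cloud, 1 ≤ k ≤ N, and let q ∈ ℝ³ be a query point whose nearest point in X is unique, i.e. there is a unique index c ∈ Fin N minimizing ‖q − X i‖ over i ∈ Fin N. Define the query feature f_q(X,q) = q − (1/|N_c^k(X)|)·Σ_{j ∈ N_c^k(X)} X j. Then for every R ∈ SO(3) and T ∈ ℝ³: (i) the unique nearest point of R·q + T in the point cloud L_{(R,T)}[X] has the same index c, and (ii) the query feature transforms as a type-1 vector: f_{R·q+T}(L_{(R,T)}[X], R·q + T) = R·f_q(X,q). -/

import Mathlib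

open Matrix

noncomputable section

/-- `SO(3)`: real 3×3 orthogonal matrices of determinant 1. -/
abbrev SO3 := Matrix.specialOrthogonalGroup (Fin 3) ℝ

noncomputable instance : Group SO3 :=
  { (inferInstance : Monoid SO3) with
    inv := fun A => ⟨star A.1, ⟨Unitary.star_mem A.2.1, by
      have h : (star A.1).det = star (A.1.det) := by
        rw [Matrix.star_eq_conjTranspose, Matrix.det_conjTranspose]
      have h2 : A.1.det = 1 := A.2.2
      simpa [MonoidHom.mem_mker, h2] using h⟩⟩
    inv_mul_cancel := fun A => Subtype.ext A.2.1.1 }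

/-- Euclidean 3-space. -/
abbrev V3 := EuclideanSpace ℝ (Fin 3)

/-- Matrix-vector multiplication on Euclidean 3-space. -/
def mv (M : Matrix (Fin 3) (Fin 3) ℝ) (v : V3) : V3 :=
  (WithLp.equiv 2 (Fin 3 → ℝ)).symm (M *ᵥ (WithLp.equiv 2 (Fin 3 → ℝ) v))

/-- Roto-translation action `L_{(R,T)}` on point clouds: `(L_{(R,T)}[X]) i = R·(X i) + T`. -/
def rt {N : ℕ} (R : SO3) (T : V3) (X : Fin N → V3) : Fin N → V3 :=
  fun i => mv (R : Matrix (Fin 3) (Fin 3) ℝ) (X i) + T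

open scoped Classical in
/-- `d_k(X,i)`: the k-th smallest distance from `X i` to points of `X`. -/
def dk {N : ℕ} (X : Fin N → V3) (i : Fin N) (k : ℕ) : ℝ :=
  sInf { d : ℝ | k ≤ (Finset.univ.filter (fun j => ‖X i - X j‖ ≤ d)).card }

open scoped Classical in
/-- `N_i^k(X)`: the k-nearest-neighbor neighborhood of point `i` (including ties). -/
def nbhd {N : ℕ} (X : Fin N → V3) (i : Fin N) (k : ℕ) : Finset (Fin N) :=
  Finset.univ.filter (fun j => ‖X i - X j‖ ≤ dk X i k)

/-- The query feature `f_q(X,q) = q − (1/|N_c^k(X)|)·Σ_{j ∈ N_c^k(X)} X j`,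
where `c` is the (unique) nearest point of `q` in `X`. -/
def qfeat {N : ℕ} (X : Fin N → V3) (q : V3) (c : Fin N) (k : ℕ) : V3 :=
  q - ((nbhd X c k).card : ℝ)⁻¹ • ∑ j ∈ nbhd X c k, X j

/-!
A rotation `R ∈ SO(3)` acts on `ℝ³` as a linear isometry, so a roto-translation preserves every
pairwise distance and every distance to the query. Hence the nearest point, `d_k` and `N_c^k`
are unchanged, and the feature is `q` minus the mean of the same points, now moved by `R · + T`.
Taking means commutes with affine maps, so the translation cancels against the one applied to `q`.
-/

open Finset

theorem inv_card_smul_sum_map_add {𝕜 E F G ι : Type*} [DivisionRing 𝕜] [CharZero 𝕜]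
    [AddCommGroup E] [Module 𝕜 E] [AddCommGroup F] [Module 𝕜 F]
    [FunLike G E F] [LinearMapClass G 𝕜 E F] (f : G) {s : Finset ι} (hs : s.Nonempty)
    (x : ι → E) (T : F) :
    (#s : 𝕜)⁻¹ • ∑ j ∈ s, (f (x j) + T) = f ((#s : 𝕜)⁻¹ • ∑ j ∈ s, x j) + T := by
  have hcard : (#s : 𝕜) ≠ 0 := Nat.cast_ne_zero.mpr hs.card_pos.ne'
  rw [sum_add_distrib, sum_const, ← map_sum, map_smul, smul_add, ← Nat.cast_smul_eq_nsmul 𝕜,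
    smul_smul, inv_mul_cancel₀ hcard, one_smul]

lemma mv_eq_toEuclideanCLM (M : Matrix (Fin 3) (Fin 3) ℝ) (v : V3) :
    mv M v = Matrix.toEuclideanCLM (n := Fin 3) (𝕜 := ℝ) M v := by
  ext i
  simp [mv, Matrix.ofLp_toEuclideanCLM]

lemma norm_mv (R : SO3) (v : V3) : ‖mv (R : Matrix (Fin 3) (Fin 3) ℝ) v‖ = ‖v‖ := by
  rw [mv_eq_toEuclideanCLM]
  exact ContinuousLinearMap.norm_map_of_mem_unitary (Unitary.map_mem _ R.2.1) v

lemma mv_sub (M : Matrix (Fin 3) (Fin 3) ℝ) (a b : V3) : mv M (a - b) = mv M a - mv M b := by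
  simp only [mv_eq_toEuclideanCLM, map_sub]

lemma add_sub_rt {N : ℕ} (R : SO3) (T : V3) (X : Fin N → V3) (q : V3) (i : Fin N) :
    (mv (R : Matrix (Fin 3) (Fin 3) ℝ) q + T) - rt R T X i =
      mv (R : Matrix (Fin 3) (Fin 3) ℝ) (q - X i) := by
  rw [rt, mv_sub, add_sub_add_right_eq_sub]

lemma norm_rt_sub_rt {N : ℕ} (R : SO3) (T : V3) (X : Fin N → V3) (i j : Fin N) :
    ‖rt R T X i - rt R T X j‖ = ‖X i - X j‖ := by
  rw [rt, add_sub_rt, norm_mv]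

section PointCloud

variable {N : ℕ} {X Y : Fin N → V3} {i : Fin N} {k : ℕ}

lemma dk_congr (h : ∀ j, ‖Y i - Y j‖ = ‖X i - X j‖) : dk Y i k = dk X i k := by
  simp only [dk, h]

lemma nbhd_congr (h : ∀ j, ‖Y i - Y j‖ = ‖X i - X j‖) : nbhd Y i k = nbhd X i k := by
  simp only [nbhd, dk_congr h, h]

lemma dk_nonneg (hk : 0 < k) : 0 ≤ dk X i k := by
  refine Real.sInf_nonneg fun d hd => ?_
  by_contra! hneg
  have hempty : ({j | ‖X i - X j‖ ≤ d} : Finset (Fin N)) = ∅ :=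
    filter_false_of_mem fun j _ hj => (hneg.trans_le (norm_nonneg _)).not_ge hj
  simp only [Set.mem_ofPred_eq, hempty, card_empty] at hd
  omega

lemma self_mem_nbhd (hk : 0 < k) : i ∈ nbhd X i k := by
  simp [nbhd, dk_nonneg hk]

end PointCloud

lemma qfeat_rt {N k : ℕ} (hk : 0 < k) (R : SO3) (T : V3) (X : Fin N → V3) (q : V3) (c : Fin N) :
    qfeat (rt R T X) (mv (R : Matrix (Fin 3) (Fin 3) ℝ) q + T) c k =
      mv (R : Matrix (Fin 3) (Fin 3) ℝ) (qfeat X q c k) := by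
  have hnbhd : nbhd (rt R T X) c k = nbhd X c k := nbhd_congr (norm_rt_sub_rt R T X c)
  simp only [qfeat, hnbhd, rt, mv_eq_toEuclideanCLM]
  rw [inv_card_smul_sum_map_add _ ⟨c, self_mem_nbhd hk⟩, map_sub]
  abel

theorem qfeat_equivariant_general (N : ℕ) (X : Fin N → V3) (k : ℕ) (hk1 : 1 ≤ k)
    (q : V3) (c : Fin N) (hc : ∀ i : Fin N, i ≠ c → ‖q - X c‖ < ‖q - X i‖)
    (R : SO3) (T : V3) :
    (∀ i : Fin N, i ≠ c →
      ‖(mv (R : Matrix (Fin 3) (Fin 3) ℝ) q + T) - rt R T X c‖ <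
        ‖(mv (R : Matrix (Fin 3) (Fin 3) ℝ) q + T) - rt R T X i‖) ∧
    qfeat (rt R T X) (mv (R : Matrix (Fin 3) (Fin 3) ℝ) q + T) c k =
      mv (R : Matrix (Fin 3) (Fin 3) ℝ) (qfeat X q c k) := by
  refine ⟨fun i hi => ?_, qfeat_rt hk1 R T X q c⟩
  simpa only [add_sub_rt, norm_mv] using hc i hi

/-- if `c` is the unique nearest point of the query `q` in `X`, then after
any roto-translation (i) `c` is still the unique nearest point of `R·q + T` in
`L_{(R,T)}[X]`, and (ii) the query feature transforms as a type-1 vector. -/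
theorem qfeat_equivariant (N : ℕ) (X : Fin N → V3) (k : ℕ) (hk1 : 1 ≤ k) (hkN : k ≤ N)
    (q : V3) (c : Fin N) (hc : ∀ i : Fin N, i ≠ c → ‖q - X c‖ < ‖q - X i‖)
    (R : SO3) (T : V3) :
    (∀ i : Fin N, i ≠ c →
      ‖(mv (R : Matrix (Fin 3) (Fin 3) ℝ) q + T) - rt R T X c‖ <
        ‖(mv (R : Matrix (Fin 3) (Fin 3) ℝ) q + T) - rt R T X i‖) ∧
    qfeat (rt R T X) (mv (R : Matrix (Fin 3) (Fin 3) ℝ) q + T) c k =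
      mv (R : Matrix (Fin 3) (Fin 3) ℝ) (qfeat X q c k) :=
  qfeat_equivariant_general N X k hk1 q c hc R T
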